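/- Jacobi's identity: as formal power series, (∏_{i≥1}(1-q^i))^3 = ∑_{n≥0} (−1)^n (2n+1) q^{n(n+1)/2}. -/

import Mathlib

/-!
Over any commutative ring the finite triple product
`∏_{t<n} (x + q^(t+1)) * ∏_{s<n} (1 + q^s x) = ∑_k q^((k-n)(k-n-1)/2) [2n choose k]_q x^k`
follows by induction from the two q-Pascal rules. Its factor `1 + x` vanishes at `x = -1`, so
differentiating at `x = -1` gives `(-1)^n (q;q)_n (q;q)_(n-1)` on the left. If `q^D = 0` and
`n ≥ 2D`, every term on the right whose power of `q` survives has `D ≤ k` and `D ≤ 2n - k`, and for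
those `[2n choose k]_q (q;q)_D = 1`; pairing `k` with `2n + 1 - k` then yields
`(q;q)_D^3 = ∑_{m<D} (-1)^m (2m+1) q^(m(m+1)/2)`. In `ℤ⟦q⟧ ⧸ (q^D)` this is the identity below
degree `D`.
-/

noncomputable def fps (k : ℕ) : PowerSeries ℤ :=
  PowerSeries.mk fun n =>
    PowerSeries.coeff (R := ℤ) n (∏ i ∈ Finset.range (n+1), (1 - PowerSeries.X ^ (k*(i+1))))

open Finset

namespace Polynomial

variable {S : Type*}

lemma coeff_mul_C_mul_X_add_one [Semiring S] (p : S[X]) (a : S) (k : ℕ) :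
    (p * (C a * X + 1)).coeff (k + 1) = p.coeff k * a + p.coeff (k + 1) := by
  simp [mul_add, ← mul_assoc, coeff_mul_X]

lemma coeff_mul_X_add_C [Semiring S] (p : S[X]) (a : S) (k : ℕ) :
    (p * (X + C a)).coeff (k + 1) = p.coeff k + p.coeff (k + 1) * a := by
  simp [mul_add, coeff_mul_X]

lemma eval_derivative_eq_sum_range [CommSemiring S] {p : S[X]} {d : ℕ} (hp : p.natDegree ≤ d)
    (x : S) : (derivative p).eval x = ∑ i ∈ range d, p.coeff (i + 1) * (i + 1) * x ^ i := by
  rcases d with _ | d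
  · simp [derivative_of_natDegree_zero (Nat.le_zero.1 hp)]
  · rw [eval_eq_sum_range' (n := d + 1) ((natDegree_derivative_le p).trans_lt (by omega))]
    simp only [coeff_derivative]

end Polynomial

section

open Polynomial

variable {R : Type*} [CommRing R] (q : R)

/-- `[m choose k]_q`; the truncated `m - k` is harmless, as `gaussBinom q m k = 0` for `m < k`. -/
def gaussBinom : ℕ → ℕ → R
  | _, 0 => 1
  | 0, _ + 1 => 0
  | m + 1, k + 1 => gaussBinom m (k + 1) + q ^ (m - k) * gaussBinom m k

@[simp] lemma gaussBinom_zero_right (m : ℕ) : gaussBinom q m 0 = 1 := by cases m <;> rfl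

lemma gaussBinom_succ_succ (m k : ℕ) :
    gaussBinom q (m + 1) (k + 1) = gaussBinom q m (k + 1) + q ^ (m - k) * gaussBinom q m k := rfl

lemma gaussBinom_eq_zero_of_lt {m k : ℕ} (h : m < k) : gaussBinom q m k = 0 := by
  induction m generalizing k with
  | zero => obtain ⟨k, rfl⟩ := Nat.exists_eq_add_one_of_ne_zero h.ne'; rfl
  | succ m ih =>
    obtain ⟨k, rfl⟩ := Nat.exists_eq_add_one_of_ne_zero (by omega : k ≠ 0)
    rw [gaussBinom_succ_succ, ih (by omega), ih (by omega), mul_zero, add_zero]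

lemma gaussBinom_succ_succ' (m k : ℕ) :
    gaussBinom q (m + 1) (k + 1) = q ^ (k + 1) * gaussBinom q m (k + 1) + gaussBinom q m k := by
  induction m generalizing k with
  | zero => cases k <;> simp [gaussBinom_succ_succ, gaussBinom_eq_zero_of_lt]
  | succ m ih =>
    cases k with
    | zero =>
      conv_lhs => rw [gaussBinom_succ_succ, ih]
      conv_rhs => rw [gaussBinom_succ_succ]
      simp only [gaussBinom_zero_right, Nat.sub_zero]
      ring
    | succ k =>
      conv_lhs => rw [gaussBinom_succ_succ, ih, ih, Nat.add_sub_add_right]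
      conv_rhs => rw [gaussBinom_succ_succ q m (k + 1), gaussBinom_succ_succ q m k]
      have key : q ^ (m - k) * q ^ (k + 1) * gaussBinom q m (k + 1) =
          q ^ (k + 1 + 1) * q ^ (m - (k + 1)) * gaussBinom q m (k + 1) := by
        rcases lt_or_ge m (k + 1) with h | h
        · simp only [gaussBinom_eq_zero_of_lt q h, mul_zero]
        · rw [← pow_add, ← pow_add, show m - k + (k + 1) = k + 1 + 1 + (m - (k + 1)) by omega]
      linear_combination key

lemma one_sub_pow_mul_gaussBinom_succ_succ (m k : ℕ) :
    (1 - q ^ (k + 1)) * gaussBinom q (m + 1) (k + 1) = (1 - q ^ (m + 1)) * gaussBinom q m k := by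
  rcases lt_or_ge m k with h | h
  · rw [gaussBinom_eq_zero_of_lt q h, gaussBinom_eq_zero_of_lt q (by omega), mul_zero, mul_zero]
  · obtain ⟨d, rfl⟩ := Nat.exists_eq_add_of_le h
    rw [sub_mul, one_mul]
    nth_rw 1 [gaussBinom_succ_succ']
    rw [gaussBinom_succ_succ, show k + d - k = d by omega]
    ring

def qPochhammer (n : ℕ) : R := ∏ i ∈ range n, (1 - q ^ (i + 1))

lemma gaussBinom_mul_qPochhammer {m k : ℕ} (h : k ≤ m) :
    gaussBinom q m k * qPochhammer q k = ∏ i ∈ range k, (1 - q ^ (m - k + i + 1)) := by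
  induction k generalizing m with
  | zero => simp [qPochhammer]
  | succ k ih =>
    obtain ⟨m, rfl⟩ := Nat.exists_eq_add_one_of_ne_zero (by omega : m ≠ 0)
    rw [qPochhammer, prod_range_succ, ← qPochhammer, prod_range_succ,
      show m + 1 - (k + 1) = m - k by omega, show m - k + k + 1 = m + 1 by omega, ← ih (by omega)]
    linear_combination qPochhammer q k * one_sub_pow_mul_gaussBinom_succ_succ q m k

def intChooseTwo (j : ℤ) : ℕ := (j * (j - 1) / 2).toNat

lemma two_mul_intChooseTwo (j : ℤ) : 2 * (intChooseTwo j : ℤ) = j * (j - 1) := by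
  have hnonneg : 0 ≤ j * (j - 1) := by
    rcases le_or_gt j 0 with h | h <;> nlinarith
  rw [intChooseTwo, Int.toNat_of_nonneg (by omega)]
  exact Int.mul_ediv_cancel' (Int.even_mul_pred_self j).two_dvd

lemma intChooseTwo_add_one (j : ℤ) : (intChooseTwo (j + 1) : ℤ) = intChooseTwo j + j := by
  linarith [two_mul_intChooseTwo j, two_mul_intChooseTwo (j + 1)]

lemma intChooseTwo_natCast_add_one (m : ℕ) : intChooseTwo ((m : ℤ) + 1) = m * (m + 1) / 2 := by
  have h := two_mul_intChooseTwo ((m : ℤ) + 1)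
  have : 2 * intChooseTwo ((m : ℤ) + 1) = m * (m + 1) := by zify; linarith
  omega

lemma intChooseTwo_neg_natCast (m : ℕ) : intChooseTwo (-m) = m * (m + 1) / 2 := by
  have h := two_mul_intChooseTwo (-m)
  have : 2 * intChooseTwo (-m) = m * (m + 1) := by zify; linarith
  omega

lemma intChooseTwo_add_one_sub_add (k n : ℕ) :
    intChooseTwo ((k : ℤ) + 1 - n) + n = intChooseTwo ((k : ℤ) - n) + k := by
  have h := intChooseTwo_add_one ((k : ℤ) - n)
  rw [sub_add_eq_add_sub] at h
  omega

lemma neg_lt_and_le_of_intChooseTwo_lt {j : ℤ} {D : ℕ} (h : intChooseTwo j < D) :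
    -D < j ∧ j ≤ D := by
  have h2 := two_mul_intChooseTwo j
  have hD : (intChooseTwo j : ℤ) < D := by exact_mod_cast h
  constructor <;> by_contra! hj <;> nlinarith

noncomputable def tripleProductPoly (n : ℕ) : R[X] :=
  (∏ t ∈ range n, (X + C (q ^ (t + 1)))) * ∏ s ∈ range n, (C (q ^ s) * X + 1)

lemma tripleProductPoly_succ (n : ℕ) :
    tripleProductPoly q (n + 1) =
      tripleProductPoly q n * (C (q ^ n) * X + 1) * (X + C (q ^ (n + 1))) := by
  simp only [tripleProductPoly, prod_range_succ]
  ring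

theorem coeff_tripleProductPoly (n k : ℕ) :
    (tripleProductPoly q n).coeff k = q ^ intChooseTwo (k - n) * gaussBinom q (2 * n) k := by
  induction n generalizing k with
  | zero => cases k <;> simp [tripleProductPoly, coeff_one, intChooseTwo, gaussBinom_eq_zero_of_lt]
  | succ n ih =>
    have hU : ∀ k : ℕ, (tripleProductPoly q n * (C (q ^ n) * X + 1)).coeff k =
        q ^ intChooseTwo (k - n) * gaussBinom q (2 * n + 1) k := by
      rintro (_ | k)
      · simp [mul_add, ← mul_assoc, ih]
      · rw [coeff_mul_C_mul_X_add_one, ih, ih, gaussBinom_succ_succ, Nat.cast_succ]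
        have h := intChooseTwo_add_one_sub_add k n
        rcases lt_or_ge (2 * n) k with hk | hk
        · simp only [gaussBinom_eq_zero_of_lt q hk]
          ring
        · have e : intChooseTwo ((k : ℤ) - n) + n =
              intChooseTwo ((k : ℤ) + 1 - n) + (2 * n - k) := by omega
          linear_combination gaussBinom q (2 * n) k * congrArg (q ^ ·) e
    rw [tripleProductPoly_succ, show 2 * (n + 1) = 2 * n + 1 + 1 by ring]
    rcases k with _ | k
    · have h := intChooseTwo_add_one_sub_add 0 (n + 1)
      rw [show ((0 : ℕ) : ℤ) + 1 - ((n + 1 : ℕ) : ℤ) = (0 : ℕ) - n by push_cast; ring] at h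
      rw [mul_coeff_zero, hU]
      simp only [gaussBinom_zero_right, coeff_add, coeff_X_zero, coeff_C_zero, zero_add, mul_one,
        ← pow_add, h, add_zero]
    · have h := intChooseTwo_add_one_sub_add k n
      rw [coeff_mul_X_add_C, hU, hU, gaussBinom_succ_succ' q (2 * n + 1) k, Nat.cast_succ,
        Nat.cast_succ, add_sub_add_right_eq_sub]
      linear_combination q * gaussBinom q (2 * n + 1) (k + 1) * congrArg (q ^ ·) h

lemma natDegree_tripleProductPoly_le (n : ℕ) : (tripleProductPoly q n).natDegree ≤ 2 * n :=
  natDegree_le_iff_coeff_eq_zero.2 fun _ hN => by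
    rw [coeff_tripleProductPoly, gaussBinom_eq_zero_of_lt q hN, mul_zero]

theorem eval_neg_one_derivative_tripleProductPoly (n : ℕ) :
    (derivative (tripleProductPoly q (n + 1))).eval (-1) =
      (-1) ^ (n + 1) * (qPochhammer q (n + 1) * qPochhammer q n) := by
  set W := (∏ t ∈ range (n + 1), (X + C (q ^ (t + 1)))) * ∏ s ∈ range n, (C (q ^ (s + 1)) * X + 1)
  have hW : tripleProductPoly q (n + 1) = W * (X + 1) := by
    simp only [W, tripleProductPoly, prod_range_succ' (fun s => C (q ^ s) * X + 1), pow_zero,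
      map_one, one_mul]
    ring
  rw [hW, derivative_mul]
  simp only [W, eval_add, eval_mul, eval_one, eval_X, eval_prod, eval_C, derivative_add,
    derivative_X, derivative_one, add_zero, neg_add_cancel, mul_zero, zero_add, mul_one,
    qPochhammer]
  have h₁ : ∏ t ∈ range (n + 1), (-1 + q ^ (t + 1)) = ∏ t ∈ range (n + 1), -(1 - q ^ (t + 1)) :=
    prod_congr rfl fun _ _ => by ring
  have h₂ : ∏ s ∈ range n, (q ^ (s + 1) * -1 + 1) = ∏ s ∈ range n, (1 - q ^ (s + 1)) :=
    prod_congr rfl fun _ _ => by ring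
  rw [h₁, h₂, prod_neg, card_range, mul_assoc]

def jacobiPartialSum (n : ℕ) : R := ∑ m ∈ range n, (-1) ^ m * (2 * m + 1) * q ^ (m * (m + 1) / 2)

lemma sum_range_two_mul_eq_jacobiPartialSum (n : ℕ) :
    ∑ i ∈ range (2 * n), q ^ intChooseTwo ((i : ℤ) + 1 - n) * ((i : R) + 1) * (-1) ^ i =
      (-1) ^ n * jacobiPartialSum q n := by
  rw [two_mul, sum_range_add, ← sum_range_reflect _ n, ← sum_add_distrib, jacobiPartialSum, mul_sum]
  refine sum_congr rfl fun m hm => ?_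
  obtain ⟨r, rfl⟩ : ∃ r, n = m + 1 + r := ⟨n - m - 1, by have := mem_range.1 hm; omega⟩
  rw [show m + 1 + r - 1 - m = r by omega]
  push_cast
  rw [show (r : ℤ) + 1 - (m + 1 + r) = -m by ring,
    show (m : ℤ) + 1 + r + m + 1 - (m + 1 + r) = m + 1 by ring,
    intChooseTwo_neg_natCast, intChooseTwo_natCast_add_one, pow_add _ (m + 1 + r) m]
  have hs : ((-1 : R) ^ m) ^ 2 = 1 := by rw [← pow_mul, mul_comm, pow_mul, neg_one_sq, one_pow]
  linear_combination -(q ^ (m * (m + 1) / 2) * (-1) ^ r * ((r : R) + 1)) * hs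

section Nilpotent

variable {q} {D : ℕ}

lemma prod_one_sub_pow_eq_one (hq : q ^ D = 0) {ι : Type*} {s : Finset ι} {e : ι → ℕ}
    (h : ∀ i ∈ s, D ≤ e i) : ∏ i ∈ s, (1 - q ^ e i) = 1 :=
  prod_eq_one fun i hi => by rw [pow_eq_zero_of_le (h i hi) hq, sub_zero]

lemma qPochhammer_eq_of_pow_eq_zero (hq : q ^ D = 0) {r : ℕ} (h : D ≤ r) :
    qPochhammer q r = qPochhammer q D := by
  rw [qPochhammer, ← prod_range_mul_prod_Ico _ h,
    prod_one_sub_pow_eq_one (s := Ico D r) hq fun i hi => by have := (mem_Ico.1 hi).1; omega,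
    mul_one, qPochhammer]

lemma gaussBinom_mul_qPochhammer_eq_one (hq : q ^ D = 0) {m k : ℕ} (hk : D ≤ k)
    (hkm : k + D ≤ m) : gaussBinom q m k * qPochhammer q D = 1 := by
  rw [← qPochhammer_eq_of_pow_eq_zero hq hk, gaussBinom_mul_qPochhammer q (by omega)]
  exact prod_one_sub_pow_eq_one hq fun i _ => by omega

lemma jacobiPartialSum_eq_of_pow_eq_zero (hq : q ^ D = 0) {n : ℕ} (h : D ≤ n) :
    jacobiPartialSum q n = jacobiPartialSum q D := by
  rw [jacobiPartialSum, ← sum_range_add_sum_Ico _ h, jacobiPartialSum, add_eq_left]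
  refine sum_eq_zero fun m hm => ?_
  have hDm := (mem_Ico.1 hm).1
  have : m ≤ m * (m + 1) / 2 := (Nat.le_div_iff_mul_le two_pos).2 (by nlinarith [Nat.le_mul_self m])
  rw [pow_eq_zero_of_le (by omega) hq, mul_zero]

lemma pow_intChooseTwo_mul_gaussBinom_mul_qPochhammer (hq : q ^ D = 0) {n : ℕ} (hn : 2 * D ≤ n)
    (k : ℕ) :
    q ^ intChooseTwo ((k : ℤ) - n) * gaussBinom q (2 * n) k * qPochhammer q D =
      q ^ intChooseTwo ((k : ℤ) - n) := by
  by_cases h : D ≤ intChooseTwo ((k : ℤ) - n)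
  · simp [pow_eq_zero_of_le h hq]
  · have := neg_lt_and_le_of_intChooseTwo_lt (not_le.1 h)
    rw [mul_assoc, gaussBinom_mul_qPochhammer_eq_one hq (by omega) (by omega), mul_one]

theorem qPochhammer_pow_three_eq_jacobiPartialSum (hq : q ^ D = 0) :
    qPochhammer q D ^ 3 = jacobiPartialSum q D := by
  set n := 2 * D
  have hsum : (derivative (tripleProductPoly q (n + 1))).eval (-1) * qPochhammer q D =
      (-1) ^ (n + 1) * jacobiPartialSum q (n + 1) := by
    rw [eval_derivative_eq_sum_range (natDegree_tripleProductPoly_le q (n + 1)), sum_mul,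
      ← sum_range_two_mul_eq_jacobiPartialSum]
    refine sum_congr rfl fun i _ => ?_
    have h := pow_intChooseTwo_mul_gaussBinom_mul_qPochhammer hq (by omega : 2 * D ≤ n + 1) (i + 1)
    rw [Nat.cast_succ] at h
    rw [coeff_tripleProductPoly, Nat.cast_succ]
    linear_combination ((i : R) + 1) * (-1) ^ i * h
  rw [eval_neg_one_derivative_tripleProductPoly, qPochhammer_eq_of_pow_eq_zero hq (by omega),
    qPochhammer_eq_of_pow_eq_zero hq (by omega : D ≤ n),
    jacobiPartialSum_eq_of_pow_eq_zero hq (by omega)] at hsum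
  refine (isUnit_neg_one.pow (n + 1)).mul_left_cancel ?_
  rw [← hsum]
  ring

end Nilpotent

lemma map_qPochhammer {S : Type*} [CommRing S] (f : R →+* S) (n : ℕ) :
    f (qPochhammer q n) = qPochhammer (f q) n := by
  simp [qPochhammer, map_prod]

lemma map_jacobiPartialSum {S : Type*} [CommRing S] (f : R →+* S) (n : ℕ) :
    f (jacobiPartialSum q n) = jacobiPartialSum (f q) n := by
  simp [jacobiPartialSum, map_sum, map_ofNat]

end

namespace PowerSeries

variable {R : Type*} [CommRing R]

lemma quotient_mk_span_X_pow_eq_iff {d : ℕ} {f g : R⟦X⟧} :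
    Ideal.Quotient.mk (Ideal.span {X ^ d}) f = Ideal.Quotient.mk _ g ↔
      ∀ i < d, coeff i f = coeff i g := by
  simp only [Ideal.Quotient.eq, Ideal.mem_span_singleton, X_pow_dvd_iff, map_sub, sub_eq_zero]

lemma quotient_mk_X_pow_eq_zero (d : ℕ) :
    Ideal.Quotient.mk (Ideal.span {X ^ d}) (X : R⟦X⟧) ^ d = 0 := by
  rw [← map_pow, Ideal.Quotient.eq_zero_iff_mem]
  exact Ideal.mem_span_singleton_self _

lemma coeff_jacobiPartialSum_X (n N : ℕ) :
    coeff N (jacobiPartialSum (X : R⟦X⟧) n) =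
      ∑ m ∈ Finset.range n, if m * (m + 1) / 2 = N then (-1 : R) ^ m * (2 * m + 1) else 0 := by
  rw [jacobiPartialSum, map_sum]
  refine Finset.sum_congr rfl fun m _ => ?_
  have hC : ((-1) ^ m * (2 * m + 1) : R⟦X⟧) = C ((-1 : R) ^ m * (2 * m + 1)) := by simp [map_ofNat]
  simp only [hC, coeff_C_mul_X_pow, eq_comm]

end PowerSeries

open PowerSeries in
lemma quotient_mk_fps_one (d : ℕ) :
    Ideal.Quotient.mk (Ideal.span {X ^ d}) (fps 1) =
      Ideal.Quotient.mk _ (qPochhammer (X : ℤ⟦X⟧) d) := by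
  refine quotient_mk_span_X_pow_eq_iff.2 fun i hi => ?_
  have h : Ideal.Quotient.mk (Ideal.span {X ^ (i + 1)}) (qPochhammer (X : ℤ⟦X⟧) d) =
      Ideal.Quotient.mk _ (qPochhammer X (i + 1)) := by
    rw [map_qPochhammer, map_qPochhammer,
      qPochhammer_eq_of_pow_eq_zero (quotient_mk_X_pow_eq_zero _) (by omega)]
  rw [quotient_mk_span_X_pow_eq_iff.1 h i (lt_add_one i)]
  simp [fps, qPochhammer]

theorem stmt17 (N : ℕ) :
    PowerSeries.coeff (R := ℤ) N (fps 1 ^ 3) =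
      ∑ m ∈ Finset.range (N + 1),
        if m * (m + 1) / 2 = N then (-1 : ℤ) ^ m * (2 * m + 1) else 0 := by
  have h : Ideal.Quotient.mk (Ideal.span {PowerSeries.X ^ (N + 1)}) (fps 1 ^ 3) =
      Ideal.Quotient.mk _ (jacobiPartialSum PowerSeries.X (N + 1)) := by
    rw [map_pow, quotient_mk_fps_one, map_qPochhammer, map_jacobiPartialSum,
      qPochhammer_pow_three_eq_jacobiPartialSum (PowerSeries.quotient_mk_X_pow_eq_zero _)]
  rw [PowerSeries.quotient_mk_span_X_pow_eq_iff.1 h N (lt_add_one N),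
    PowerSeries.coeff_jacobiPartialSum_X]
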